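/- arXiv:2205.08154 — 3 statements merged into one kernel-verified Lean document; each statement's English description precedes it below -/
import Mathlib

section
/- Quantum no free lunch theorem: for a target unitary Y Haar-distributed on U(d), and a hypothesis unitary U that agrees with Y on an S-dimensional training subspace but is otherwise Haar-random on the complement, the expected quantum risk satisfies E[R_Y(U)] ≥ 1 − (S² + d + 1)/(d(d+1)). -/
/-!
Since `Y` is unitary, `Yᴴ (Y (𝟙 ⊕ W)) = 𝟙 ⊕ W`, so the risk depends on `W` only through
`|S + tr W|²`. Left-invariance of the Haar measure under `-1` gives `E[tr W] = 0`; under the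
diagonal matrix flipping the sign of row `i` it kills the cross terms `E[W i i * conj (W j j)]`;
under row transpositions it makes `E|W i j|²` independent of `i`, and since columns of a unitary
matrix are unit vectors that common value is `1 / (d - S)`. Hence `E|S + tr W|² = S² + 1`, and
the bound holds with equality.
-/

open Matrix MeasureTheory ComplexConjugate

namespace Matrix

variable {ι : Type*} [Fintype ι] [DecidableEq ι]

theorem isCompact_unitaryGroup {𝕜 : Type*} [RCLike 𝕜] :
    IsCompact (unitaryGroup ι 𝕜 : Set (Matrix ι ι 𝕜)) :=
  (isCompact_univ_pi fun _ => isCompact_univ_pi fun _ => isCompact_closedBall (0 : 𝕜) 1)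
    |>.of_isClosed_subset (isClosed_unitary (R := Matrix ι ι 𝕜)) fun _ hU i _ j _ =>
      mem_closedBall_zero_iff.mpr (entry_norm_bound_of_unitary hU i j)

instance {𝕜 : Type*} [RCLike 𝕜] : CompactSpace (unitaryGroup ι 𝕜) :=
  isCompact_iff_compactSpace.mp isCompact_unitaryGroup

variable {α : Type*} [CommRing α] [StarRing α]

theorem permMatrix_mem_unitaryGroup (σ : Equiv.Perm ι) :
    σ.permMatrix α ∈ unitaryGroup ι α := by
  rw [mem_unitaryGroup_iff', star_eq_conjTranspose, conjTranspose_permMatrix, ← permMatrix_mul,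
    mul_inv_cancel, permMatrix_one]

theorem diagonal_mem_unitaryGroup {v : ι → α} (hv : ∀ k, star (v k) * v k = 1) :
    diagonal v ∈ unitaryGroup ι α := by
  rw [mem_unitaryGroup_iff', star_eq_conjTranspose, diagonal_conjTranspose, diagonal_mul_diagonal,
    ← diagonal_one]
  exact congrArg diagonal (funext hv)

theorem trace_fromBlocks {m n : Type*} [Fintype m] [Fintype n] {R : Type*} [AddCommMonoid R]
    (A : Matrix m m R) (B : Matrix m n R) (C : Matrix n m R) (D : Matrix n n R) :
    trace (fromBlocks A B C D) = trace A + trace D := by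
  simp only [trace, diag, Fintype.sum_sum_type, fromBlocks_apply₁₁, fromBlocks_apply₂₂]

end Matrix

theorem Continuous.integrable_of_compactSpace {X E : Type*} [TopologicalSpace X] [CompactSpace X]
    [MeasurableSpace X] [OpensMeasurableSpace X] [NormedAddCommGroup E] {μ : Measure X}
    [IsFiniteMeasure μ] {f : X → E} (hf : Continuous f) : Integrable f μ :=
  hf.integrable_of_hasCompactSupport (.of_compactSpace f)

theorem Complex.integral_normSq_ofReal_add {Ω : Type*} [MeasurableSpace Ω] {μ : Measure Ω}
    [IsProbabilityMeasure μ] {f : Ω → ℂ} (hf : Integrable f μ)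
    (hf2 : Integrable (fun ω => normSq (f ω)) μ) (hf0 : ∫ ω, f ω ∂μ = 0) (c : ℝ) :
    ∫ ω, normSq (c + f ω) ∂μ = c ^ 2 + ∫ ω, normSq (f ω) ∂μ := by
  have hexpand : ∀ z : ℂ, normSq (c + z) = c ^ 2 + normSq z + 2 * c * z.re := fun z => by
    rw [normSq_add, normSq_ofReal, re_ofReal_mul, conj_re]
    ring
  have hre : ∫ ω, (f ω).re ∂μ = 0 := by
    simpa [hf0] using integral_re hf
  have hsq_int : Integrable (fun ω => c ^ 2 + normSq (f ω)) μ := (integrable_const _).add hf2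
  have hre_int : Integrable (fun ω => 2 * c * (f ω).re) μ := hf.re.const_mul _
  simp_rw [hexpand]
  rw [integral_add hsq_int hre_int, integral_const_mul, hre, integral_add (integrable_const _) hf2]
  simp

namespace Matrix.UnitaryGroup

theorem trace_conjTranspose_mul_mul_fromBlocks_one {m n α : Type*} [Fintype m] [Fintype n]
    [DecidableEq m] [DecidableEq n] [CommRing α] [StarRing α]
    (Y : unitaryGroup (m ⊕ n) α) (W : Matrix n n α) :
    trace ((Y : Matrix (m ⊕ n) (m ⊕ n) α)ᴴ *
        ((Y : Matrix (m ⊕ n) (m ⊕ n) α) * fromBlocks 1 0 0 W)) =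
      Fintype.card m + trace W := by
  rw [← Matrix.mul_assoc, ← star_eq_conjTranspose, UnitaryGroup.star_mul_self, Matrix.one_mul,
    trace_fromBlocks, trace_one]

variable {ι : Type*} [Fintype ι] [DecidableEq ι]

theorem sum_normSq_apply_left (W : unitaryGroup ι ℂ) (j : ι) :
    ∑ k, Complex.normSq ((W : Matrix ι ι ℂ) k j) = 1 := by
  have h : (star (W : Matrix ι ι ℂ) * W) j j = 1 := by
    rw [UnitaryGroup.star_mul_self]
    exact one_apply_eq j
  rw [Matrix.mul_apply] at h
  simp only [star_apply, RCLike.star_def, ← Complex.normSq_eq_conj_mul_self] at h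
  exact_mod_cast h

theorem continuous_coe_apply (i j : ι) :
    Continuous fun W : unitaryGroup ι ℂ => (W : Matrix ι ι ℂ) i j :=
  continuous_subtype_val.matrix_elem i j

variable [MeasurableSpace (unitaryGroup ι ℂ)] [BorelSpace (unitaryGroup ι ℂ)]
  (μ : Measure (unitaryGroup ι ℂ)) [μ.IsMulLeftInvariant]

theorem integral_trace : ∫ W, trace (W : Matrix ι ι ℂ) ∂μ = 0 :=
  integral_eq_zero_of_mul_left_eq_neg (g := -1) fun W => by simp [Unitary.coe_neg, trace_neg]

theorem integral_comp_apply_eq {E : Type*} [NormedAddCommGroup E] [NormedSpace ℝ E]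
    (f : ℂ → E) (i k j : ι) :
    ∫ W, f ((W : Matrix ι ι ℂ) i j) ∂μ = ∫ W, f ((W : Matrix ι ι ℂ) k j) ∂μ := by
  let P : unitaryGroup ι ℂ := ⟨_, permMatrix_mem_unitaryGroup (Equiv.swap i k)⟩
  rw [← integral_mul_left_eq_self _ P]
  congr with W
  rw [mul_val, PEquiv.toMatrix_toPEquiv_mul]
  simp

theorem integral_apply_mul_conj_apply_of_ne {i j : ι} (hij : i ≠ j) (k l : ι) :
    ∫ W, (W : Matrix ι ι ℂ) i k * conj ((W : Matrix ι ι ℂ) j l) ∂μ = 0 := by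
  let v : ι → ℂ := Function.update 1 i (-1)
  have hv : ∀ m, star (v m) * v m = 1 := fun m => by
    rcases eq_or_ne m i with rfl | hm <;> simp [v, Function.update_of_ne, *]
  refine integral_eq_zero_of_mul_left_eq_neg (g := ⟨diagonal v, diagonal_mem_unitaryGroup hv⟩)
    fun W => ?_
  simp [diagonal_mul, v, Function.update_of_ne hij.symm]

variable [IsProbabilityMeasure μ]

theorem integral_normSq_apply (i j : ι) :
    ∫ W, Complex.normSq ((W : Matrix ι ι ℂ) i j) ∂μ = (Fintype.card ι : ℝ)⁻¹ := by
  have hint : ∀ k, Integrable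
      (fun W : unitaryGroup ι ℂ => Complex.normSq ((W : Matrix ι ι ℂ) k j)) μ :=
    fun k => (Complex.continuous_normSq.comp (continuous_coe_apply k j)).integrable_of_compactSpace
  refine eq_inv_of_mul_eq_one_right ?_
  calc (Fintype.card ι : ℝ) * ∫ W, Complex.normSq ((W : Matrix ι ι ℂ) i j) ∂μ
      = ∑ k, ∫ W, Complex.normSq ((W : Matrix ι ι ℂ) k j) ∂μ := by
        rw [Finset.sum_congr rfl fun k _ => integral_comp_apply_eq μ Complex.normSq k i j,
          Finset.sum_const, Finset.card_univ, nsmul_eq_mul]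
    _ = 1 := by
        rw [← integral_finsetSum _ fun k _ => hint k]
        simp [sum_normSq_apply_left]

theorem integral_normSq_trace [Nonempty ι] :
    ∫ W, Complex.normSq (trace (W : Matrix ι ι ℂ)) ∂μ = 1 := by
  have hint : ∀ i j, Integrable (fun W : unitaryGroup ι ℂ =>
      (W : Matrix ι ι ℂ) i i * conj ((W : Matrix ι ι ℂ) j j)) μ :=
    fun i j => ((continuous_coe_apply i i).mul
      (Complex.continuous_conj.comp (continuous_coe_apply j j))).integrable_of_compactSpace
  have hexpand : ∀ W : unitaryGroup ι ℂ, (Complex.normSq (trace (W : Matrix ι ι ℂ)) : ℂ)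
      = ∑ i, ∑ j, (W : Matrix ι ι ℂ) i i * conj ((W : Matrix ι ι ℂ) j j) := fun W => by
    rw [← Complex.mul_conj, trace, map_sum, Finset.sum_mul_sum]
    rfl
  have hdiag : ∀ i,
      ∑ j, ∫ W, (W : Matrix ι ι ℂ) i i * conj ((W : Matrix ι ι ℂ) j j) ∂μ =
        (Fintype.card ι : ℂ)⁻¹ := fun i => by
    rw [Finset.sum_eq_single i (fun j _ hji => integral_apply_mul_conj_apply_of_ne μ hji.symm _ _)
      (by simp)]
    simp_rw [Complex.mul_conj, integral_complex_ofReal, integral_normSq_apply]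
    push_cast
    rfl
  apply Complex.ofReal_injective
  rw [← integral_complex_ofReal]
  simp_rw [hexpand]
  rw [integral_finsetSum _ fun i _ => integrable_finsetSum _ fun j _ => hint i j]
  simp_rw [integral_finsetSum _ fun j _ => hint _ j, hdiag]
  simp

theorem integral_normSq_ofReal_add_trace [Nonempty ι] (c : ℝ) :
    ∫ W, Complex.normSq (c + trace (W : Matrix ι ι ℂ)) ∂μ = c ^ 2 + 1 := by
  have htrace : Continuous fun W : unitaryGroup ι ℂ => trace (W : Matrix ι ι ℂ) :=
    continuous_subtype_val.matrix_trace
  rw [Complex.integral_normSq_ofReal_add htrace.integrable_of_compactSpace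
    (Complex.continuous_normSq.comp htrace).integrable_of_compactSpace (integral_trace μ),
    integral_normSq_trace]

end Matrix.UnitaryGroup

/-- Quantum no free lunch theorem: for a target unitary `Y` on `ℂ^d` and a hypothesis
unitary `U W = Y · (𝟙_S ⊕ W)` that agrees with `Y` on an `S`-dimensional training subspace
but is Haar-random (via `W`) on the complement, the expected quantum risk
`E[d/(d+1) − |tr(Y†·U W)|²/(d(d+1))]` is at least `1 − (S² + d + 1)/(d(d+1))`. -/
theorem quantum_no_free_lunch (d S : ℕ) (hS : S < d)
    [MeasurableSpace (Matrix.unitaryGroup (Fin (d - S)) ℂ)]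
    [BorelSpace (Matrix.unitaryGroup (Fin (d - S)) ℂ)]
    (μ : Measure (Matrix.unitaryGroup (Fin (d - S)) ℂ))
    [μ.IsHaarMeasure] [IsProbabilityMeasure μ]
    (Y : Matrix.unitaryGroup (Fin S ⊕ Fin (d - S)) ℂ) :
    (∫ W : Matrix.unitaryGroup (Fin (d - S)) ℂ,
        ((d : ℝ) / ((d : ℝ) + 1)
          - (‖(Matrix.trace
              ((Y : Matrix (Fin S ⊕ Fin (d - S)) (Fin S ⊕ Fin (d - S)) ℂ)ᴴ *
                ((Y : Matrix (Fin S ⊕ Fin (d - S)) (Fin S ⊕ Fin (d - S)) ℂ) *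
                  Matrix.fromBlocks 1 0 0
                    (W : Matrix (Fin (d - S)) (Fin (d - S)) ℂ))))‖) ^ 2 /
              ((d : ℝ) * ((d : ℝ) + 1))) ∂μ)
      ≥ 1 - ((S : ℝ) ^ 2 + (d : ℝ) + 1) / ((d : ℝ) * ((d : ℝ) + 1)) := by
  have : Nonempty (Fin (d - S)) := ⟨⟨0, Nat.sub_pos_of_lt hS⟩⟩
  have hd : (d : ℝ) ≠ 0 := by exact_mod_cast hS.ne_bot
  have hint : Integrable (fun W : unitaryGroup (Fin (d - S)) ℂ =>
      Complex.normSq ((S : ℝ) + trace (W : Matrix (Fin (d - S)) (Fin (d - S)) ℂ))) μ :=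
    (Complex.continuous_normSq.comp
      (continuous_const.add continuous_subtype_val.matrix_trace)).integrable_of_compactSpace
  simp_rw [UnitaryGroup.trace_conjTranspose_mul_mul_fromBlocks_one, Fintype.card_fin,
    ← Complex.ofReal_natCast, Complex.sq_norm]
  rw [integral_sub (integrable_const _) (hint.div_const _), integral_const, integral_div,
    UnitaryGroup.integral_normSq_ofReal_add_trace]
  apply le_of_eq
  simp only [probReal_univ, smul_eq_mul, one_mul]
  field_simp
  ring
end

section
/- Classical no free lunch theorem: for finite sets X, Y, a uniformly random function f : X → Y, a training set S of |S| = S input–output pairs, and any hypothesis h consistent with f on the training set (and otherwise uniformly guessing), the probability that h(x) ≠ f(x) for uniformly random x ∈ X is at least (1 − S/|X|)(1 − 1/|Y|). -/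
/-!
The functions agreeing with `h` on `s` form a product set, `∏ x, (if x ∈ s then {h x} else Y)`,
so for `x ∉ s` the value `f x` of a consistent `f` is uniformly distributed on `Y` and misses
`h x` for exactly a fraction `1 - 1/|Y|` of them, while for `x ∈ s` it never does. Double counting
the pairs `(f, x)` with `h x ≠ f x` then gives the bound, in fact with equality.
-/

open Finset

section

variable {X Y : Type*} [Fintype X] [Fintype Y] [DecidableEq X] [DecidableEq Y]

theorem card_filter_forall_mem_apply_eq (s : Finset X) (g : X → Y) :
    #{f : X → Y | ∀ x ∈ s, f x = g x} = Fintype.card Y ^ #sᶜ := by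
  have hpi : ({f : X → Y | ∀ x ∈ s, f x = g x} : Finset (X → Y))
      = Fintype.piFinset (fun x => if x ∈ s then {g x} else univ) := by
    ext f
    simp only [mem_filter, mem_univ, true_and, Fintype.mem_piFinset]
    refine forall_congr' fun x => ?_
    split_ifs <;> simp [*]
  rw [hpi, Fintype.card_piFinset]
  simp [apply_ite card, prod_ite, compl_eq_univ_sdiff, filter_notMem_eq_sdiff]

theorem card_filter_forall_mem_apply_eq_and_ne (s : Finset X) (g : X → Y) {x : X}
    (hx : x ∉ s) :
    (#{f : X → Y | (∀ z ∈ s, f z = g z) ∧ g x ≠ f x} : ℝ)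
      = #{f : X → Y | ∀ z ∈ s, f z = g z} * (1 - 1 / Fintype.card Y) := by
  have hsplit := card_filter_add_card_filter_not
    (s := {f : X → Y | ∀ z ∈ s, f z = g z}) (fun f => g x = f x)
  have hagree : ({f : X → Y | (∀ z ∈ s, f z = g z) ∧ g x = f x} : Finset (X → Y))
      = ({f : X → Y | ∀ z ∈ insert x s, f z = g z} : Finset (X → Y)) := by
    ext f
    simp only [mem_filter, mem_univ, true_and, forall_mem_insert]
    rw [and_comm, eq_comm]
  have hk : #sᶜ ≠ 0 := card_ne_zero.2 ⟨x, mem_compl.2 hx⟩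
  have hY : (Fintype.card Y : ℝ) ≠ 0 := Nat.cast_ne_zero.2 (Fintype.card_pos_iff.2 ⟨g x⟩).ne'
  rw [filter_filter, filter_filter, hagree, card_filter_forall_mem_apply_eq,
    card_filter_forall_mem_apply_eq, compl_insert, card_erase_of_mem (mem_compl.2 hx),
    ← pow_sub_one_mul hk, ← Nat.cast_inj (R := ℝ)] at hsplit
  rw [card_filter_forall_mem_apply_eq, ← pow_sub_one_mul hk]
  push_cast at hsplit ⊢
  field_simp
  linarith

theorem sum_card_filter_apply_ne_eq (s : Finset X) (g : X → Y) :
    ∑ f ∈ {f : X → Y | ∀ z ∈ s, f z = g z}, (#{x | g x ≠ f x} : ℝ)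
      = (Fintype.card X - #s) * #{f : X → Y | ∀ z ∈ s, f z = g z}
          * (1 - 1 / Fintype.card Y) := by
  set C : Finset (X → Y) := {f | ∀ z ∈ s, f z = g z}
  have hswap : ∑ f ∈ C, #{x | g x ≠ f x} = ∑ x, #{f ∈ C | g x ≠ f x} :=
    sum_card_bipartiteAbove_eq_sum_card_bipartiteBelow (r := fun (f : X → Y) x => g x ≠ f x)
  have hs : ∀ x ∈ s, {f ∈ C | g x ≠ f x} = ∅ := fun x hx =>
    filter_eq_empty_iff.2 fun f hf => not_not.2 ((mem_filter.1 hf).2 x hx).symm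
  calc (∑ f ∈ C, #{x | g x ≠ f x} : ℝ)
      = ∑ x, (#{f ∈ C | g x ≠ f x} : ℝ) := by exact_mod_cast hswap
    _ = ∑ x ∈ sᶜ, (#{f ∈ C | g x ≠ f x} : ℝ) :=
      (sum_subset (subset_univ _) fun x _ hx => by simp [hs x (by simpa using hx)]).symm
    _ = ∑ x ∈ sᶜ, (#C : ℝ) * (1 - 1 / Fintype.card Y) := sum_congr rfl fun x hx => by
      rw [filter_filter]
      exact card_filter_forall_mem_apply_eq_and_ne s g (mem_compl.1 hx)
    _ = (Fintype.card X - #s) * #C * (1 - 1 / Fintype.card Y) := by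
      rw [sum_const, card_compl, nsmul_eq_mul, Nat.cast_sub (card_le_univ s), mul_assoc]

end

theorem classical_no_free_lunch_general {X Y : Type*} [Fintype X] [Fintype Y]
    [DecidableEq X] [DecidableEq Y] [Nonempty X]
    (s : Finset X) (h : X → Y) :
    ((1 : ℝ) - (s.card : ℝ) / (Fintype.card X)) * (1 - 1 / (Fintype.card Y))
      ≤ (∑ f ∈ Finset.univ.filter (fun f : X → Y => ∀ x ∈ s, f x = h x),
            (((Finset.univ.filter (fun x : X => h x ≠ f x)).card : ℝ) / (Fintype.card X)))
          / ((Finset.univ.filter (fun f : X → Y => ∀ x ∈ s, f x = h x)).card : ℝ) := by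
  have hC : (#{f : X → Y | ∀ x ∈ s, f x = h x} : ℝ) ≠ 0 :=
    Nat.cast_ne_zero.2 (card_ne_zero.2 ⟨h, by simp⟩)
  have hX : (Fintype.card X : ℝ) ≠ 0 := Nat.cast_ne_zero.2 Fintype.card_ne_zero
  rw [← sum_div, sum_card_filter_apply_ne_eq]
  field_simp
  exact le_rfl

/-- Classical no free lunch theorem: for finite sets `X`, `Y`, a uniformly random function
`f : X → Y` consistent with the hypothesis `h` on the training set `s`, the average
probability that `h x ≠ f x` for uniformly random `x` is at least
`(1 − |s|/|X|)·(1 − 1/|Y|)`. -/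
theorem classical_no_free_lunch {X Y : Type*} [Fintype X] [Fintype Y]
    [DecidableEq X] [DecidableEq Y] [Nonempty X] [Nonempty Y]
    (s : Finset X) (h : X → Y) :
    ((1 : ℝ) - (s.card : ℝ) / (Fintype.card X)) * (1 - 1 / (Fintype.card Y))
      ≤ (∑ f ∈ Finset.univ.filter (fun f : X → Y => ∀ x ∈ s, f x = h x),
            (((Finset.univ.filter (fun x : X => h x ≠ f x)).card : ℝ) / (Fintype.card X)))
          / ((Finset.univ.filter (fun f : X → Y => ∀ x ∈ s, f x = h x)).card : ℝ) :=
  classical_no_free_lunch_general s h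
end

section
/- Classical no free lunch theorem for invertible functions: with |X| = |Y| and f a uniformly random bijection X → X, a hypothesis consistent with f on a training set of size S and otherwise guessing uniformly among the remaining values has misclassification probability at least (1 − S/|X|)·((|X|−S−1)/|X|)·(|X|/(|X|−S)) = 1 − (S+1)/|X| when averaged. -/
/-!
Write a permutation consistent with `h` on `s` as `f = h * g`; then `g` ranges over the pointwise
stabiliser `G` of `s`, and `f` errs at `x` exactly when `g` moves `x`. By Burnside's lemma the
total number of fixed points of the elements of `G` is `|G|` times the number of `G`-orbits, and
there are at most `|s| + 1` orbits: the points of `s`, and the complement of `s`, on which the transpositions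
in `G` act transitively. So on average `f` errs at no fewer than `|X| - (|s| + 1)` points.
-/

open Finset MulAction Equiv

theorem sum_card_moved_add_card_orbits_mul_eq {G X : Type*} [Group G] [MulAction G X]
    [Fintype G] [Fintype X] [DecidableEq X] :
    ∑ g : G, #{x : X | g • x ≠ x} + Nat.card (orbitRel.Quotient G X) * Fintype.card G
      = Fintype.card X * Fintype.card G := by
  classical
  rw [Nat.card_eq_fintype_card, ← sum_card_fixedBy_eq_card_orbits_mul_card_group,
    ← sum_add_distrib, mul_comm, ← card_univ (α := G)]
  refine sum_const_nat fun g _ => ?_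
  have : (fixedBy X g).toFinset = univ.filter (fun x => g • x = x) := by ext; simp
  rw [← Set.toFinset_card, this, add_comm, card_filter_add_card_filter_not, card_univ]

section

variable {X : Type*} [DecidableEq X]

theorem swap_mem_fixingSubgroup {s : Set X} {x y : X} (hx : x ∉ s) (hy : y ∉ s) :
    swap x y ∈ fixingSubgroup (Perm X) s :=
  (mem_fixingSubgroup_iff _).mpr fun _ hz =>
    swap_apply_of_ne_of_ne (ne_of_mem_of_not_mem hz hx) (ne_of_mem_of_not_mem hz hy)

theorem natCard_orbitRel_quotient_fixingSubgroup_le (s : Finset X) :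
    Nat.card (orbitRel.Quotient (fixingSubgroup (Perm X) (s : Set X)) X) ≤ #s + 1 := by
  let label : X → Option s := fun x => if hx : x ∈ s then some ⟨x, hx⟩ else none
  have label_smul : ∀ (g : fixingSubgroup (Perm X) (s : Set X)) x, label (g • x) = label x := by
    intro ⟨g, hg⟩ x
    rw [mem_fixingSubgroup_iff] at hg
    by_cases hx : x ∈ s
    · simp [hg x hx]
    · have : g x ∉ s := fun hgx => hx (g.injective (hg _ hgx) ▸ hgx)
      simp [label, hx, this]
  let orbitLabel : orbitRel.Quotient (fixingSubgroup (Perm X) (s : Set X)) X → Option s :=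
    Quotient.lift label (by rintro _ y ⟨g, rfl⟩; exact label_smul g y)
  have orbitLabel_injective : Function.Injective orbitLabel := by
    refine Quotient.ind₂ fun x y hxy => Quotient.sound ?_
    change label x = label y at hxy
    by_cases hx : x ∈ s <;> by_cases hy : y ∈ s <;> simp [label, hx, hy] at hxy
    · rw [hxy]
    · exact ⟨⟨swap y x, swap_mem_fixingSubgroup hy hx⟩, swap_apply_left y x⟩
  calc Nat.card _ ≤ Nat.card (Option s) := Nat.card_le_card_of_injective _ orbitLabel_injective
    _ = #s + 1 := by simp

variable [Fintype X]

def permsAgreeingOn (s : Finset X) (h : Perm X) : Finset (Perm X) :=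
  univ.filter fun f => ∀ x ∈ s, f x = h x

@[simp]
theorem mem_permsAgreeingOn {s : Finset X} {h f : Perm X} :
    f ∈ permsAgreeingOn s h ↔ ∀ x ∈ s, f x = h x := by
  simp [permsAgreeingOn]

theorem sum_permsAgreeingOn_eq {M : Type*} [AddCommMonoid M] (s : Finset X) (h : Perm X)
    (F : Perm X → M) :
    ∑ f ∈ permsAgreeingOn s h, F f = ∑ g ∈ permsAgreeingOn s 1, F (h * g) := by
  refine (sum_nbij' (h * ·) (h⁻¹ * ·) ?_ ?_ ?_ ?_ ?_).symm <;> intro g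
  all_goals simp [Perm.mul_apply, eq_symm_apply, eq_comm]

theorem sum_permsAgreeingOn_one_eq {M : Type*} [AddCommMonoid M] (s : Finset X)
    (F : Perm X → M) [Fintype (fixingSubgroup (Perm X) (s : Set X))] :
    ∑ g ∈ permsAgreeingOn s 1, F g = ∑ g : fixingSubgroup (Perm X) (s : Set X), F g :=
  sum_subtype _ (by simp [mem_fixingSubgroup_iff, Perm.smul_def]) F

theorem card_mul_card_permsAgreeingOn_le (s : Finset X) (h : Perm X) :
    Fintype.card X * #(permsAgreeingOn s h)
      ≤ ∑ f ∈ permsAgreeingOn s h, #{x | h x ≠ f x}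
        + (#s + 1) * #(permsAgreeingOn s h) := by
  classical
  have card_eq :
      #(permsAgreeingOn s h) = Fintype.card (fixingSubgroup (Perm X) (s : Set X)) := by
    rw [card_eq_sum_ones, sum_permsAgreeingOn_eq, sum_permsAgreeingOn_one_eq, sum_const,
      card_univ, smul_eq_mul, mul_one]
  have sum_eq : ∑ f ∈ permsAgreeingOn s h, #{x | h x ≠ f x}
      = ∑ g : fixingSubgroup (Perm X) (s : Set X), #{x : X | g • x ≠ x} := by
    rw [sum_permsAgreeingOn_eq, sum_permsAgreeingOn_one_eq]
    simp [Perm.mul_apply, Subgroup.smul_def, Perm.smul_def, ne_comm]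
  have burnside :=
    sum_card_moved_add_card_orbits_mul_eq (G := fixingSubgroup (Perm X) (s : Set X)) (X := X)
  have orbits_le := Nat.mul_le_mul_right (Fintype.card (fixingSubgroup (Perm X) (s : Set X)))
    (natCard_orbitRel_quotient_fixingSubgroup_le s)
  rw [card_eq, sum_eq]
  omega

end

/-- Classical no free lunch theorem for invertible functions: for a finite set `X`, a
uniformly random bijection `f : X ≃ X` consistent with the bijective hypothesis `h` on the
training set `s`, the average probability that `h x ≠ f x` for uniformly random `x` is at
least `1 − (|s| + 1)/|X|`. -/
theorem classical_no_free_lunch_invertible {X : Type*} [Fintype X] [DecidableEq X]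
    [Nonempty X] (s : Finset X) (h : Equiv.Perm X) :
    (1 : ℝ) - ((s.card : ℝ) + 1) / (Fintype.card X)
      ≤ (∑ f ∈ Finset.univ.filter (fun f : Equiv.Perm X => ∀ x ∈ s, f x = h x),
            (((Finset.univ.filter (fun x : X => h x ≠ f x)).card : ℝ) / (Fintype.card X)))
          / ((Finset.univ.filter (fun f : Equiv.Perm X => ∀ x ∈ s, f x = h x)).card : ℝ) := by
  change _ ≤ (∑ f ∈ permsAgreeingOn s h, _) / (#(permsAgreeingOn s h) : ℝ)
  set P := permsAgreeingOn s h
  have card_P_pos : 0 < #P := card_pos.mpr ⟨h, by simp [P]⟩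
  have card_X_pos : (0 : ℝ) < Fintype.card X := by exact_mod_cast Fintype.card_pos
  have key :
      (Fintype.card X : ℝ) * #P ≤ ∑ f ∈ P, (#{x | h x ≠ f x} : ℝ) + (#s + 1) * #P := by
    exact_mod_cast card_mul_card_permsAgreeingOn_le s h
  rw [← sum_div, div_div, le_div_iff₀ (by positivity)]
  calc (1 - ((#s : ℝ) + 1) / Fintype.card X) * (Fintype.card X * #P)
      = Fintype.card X * #P - (#s + 1) * #P := by field_simp
    _ ≤ _ := by linarith
end
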